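/- arXiv:2602.15311 — 4 statements merged into one kernel-verified Lean document; each statement's English description precedes it below -/
import Mathlib

section
/- For every string T = T[1..n] and every position j with 1 ≤ j < n, it holds that LPF[j+1] ≥ LPF[j] − 1. -/
variable {α : Type*}

/-- `occursAt T S p`: the string `S` occurs at the 1-based position `p` in `T`,
i.e. `1 ≤ p ≤ |T| − |S| + 1` and `T[p..p+|S|−1] = S`. -/
def occursAt (T S : List α) (p : ℕ) : Prop :=
  1 ≤ p ∧ p + S.length ≤ T.length + 1 ∧ (T.drop (p - 1)).take S.length = S

/-- `#occ_T(S)`: the number of positions at which `S` occurs in `T`. -/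
noncomputable def occCount (T S : List α) : ℕ :=
  {p : ℕ | occursAt T S p}.ncard

/-- `sub T i ℓ = T[i..i+ℓ−1]` (1-based substring of length `ℓ` starting at `i`). -/
def sub (T : List α) (i ℓ : ℕ) : List α := (T.drop (i - 1)).take ℓ

/-- Longest previous factor array (1-based): `LPF T i` is the largest `ℓ ≥ 0` such that
the prefix `T[i..i+ℓ−1]` of `T[i..n]` also occurs at some position `j < i` in `T`. -/
noncomputable def LPF (T : List α) (i : ℕ) : ℕ :=
  @Nat.findGreatest
    (fun ℓ => (i - 1) + ℓ ≤ T.length ∧ ∃ j, 1 ≤ j ∧ j < i ∧ occursAt T (sub T i ℓ) j)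
    (Classical.decPred _) T.length

/-- Longest repeating suffix array (1-based): `LRS T i` is the length of the longest
suffix of `T[1..i]` occurring at least twice in `T[1..i]`. -/
noncomputable def LRS (T : List α) (i : ℕ) : ℕ :=
  @Nat.findGreatest
    (fun ℓ => 2 ≤ occCount (T.take i) ((T.take i).drop (i - ℓ)))
    (Classical.decPred _) i

section

variable {T S : List α} {i ℓ p : ℕ}

theorem length_sub (h : (i - 1) + ℓ ≤ T.length) : (sub T i ℓ).length = ℓ := by
  simp only [sub, List.length_take, List.length_drop]
  omega

theorem tail_sub (hi : 1 ≤ i) : (sub T i ℓ).tail = sub T (i + 1) (ℓ - 1) := by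
  rw [sub, sub, ← List.drop_one, List.drop_take, List.drop_drop]
  congr 3
  omega

theorem occursAt.tail (h : occursAt T S p) (hS : S ≠ []) : occursAt T S.tail (p + 1) := by
  obtain ⟨hp, hfit, hS_eq⟩ := h
  have hlen : 0 < S.length := List.length_pos_iff.mpr hS
  refine ⟨by omega, by rw [List.length_tail]; omega, ?_⟩
  conv_rhs => rw [← hS_eq]
  rw [List.length_tail, ← List.drop_one, List.drop_take, List.drop_drop]
  congr 2
  omega

theorem exists_occursAt_of_LPF_ne_zero (h : LPF T i ≠ 0) :
    (i - 1) + LPF T i ≤ T.length ∧ ∃ p, 1 ≤ p ∧ p < i ∧ occursAt T (sub T i (LPF T i)) p :=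
  @Nat.findGreatest_of_ne_zero _ _ (Classical.decPred _) _ rfl h

theorem le_LPF (hfit : (i - 1) + ℓ ≤ T.length) (hp : 1 ≤ p) (hpi : p < i)
    (hocc : occursAt T (sub T i ℓ) p) : ℓ ≤ LPF T i :=
  @Nat.le_findGreatest _ _ (Classical.decPred _) _ (by omega) ⟨hfit, p, hp, hpi, hocc⟩

end

theorem lpf_succ_ge_pred_general (T : List α) (j : ℕ) :
    LPF T j ≤ LPF T (j + 1) + 1 := by
  by_cases h0 : LPF T j = 0
  · omega
  obtain ⟨hfit, p, hp, hpj, hocc⟩ := exists_occursAt_of_LPF_ne_zero h0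
  have hne : sub T j (LPF T j) ≠ [] := by
    rw [← List.length_pos_iff, length_sub hfit]
    omega
  have hshift : occursAt T (sub T (j + 1) (LPF T j - 1)) (p + 1) := by
    rw [← tail_sub (by omega)]
    exact hocc.tail hne
  have hle : LPF T j - 1 ≤ LPF T (j + 1) := le_LPF (by omega) (by omega) (by omega) hshift
  omega

/-- For every string `T = T[1..n]` and every position `j` with `1 ≤ j < n`,
it holds that `LPF[j+1] ≥ LPF[j] − 1` (stated subtraction-free over ℕ). -/
theorem lpf_succ_ge_pred (T : List α) (j : ℕ) (h1 : 1 ≤ j) (h2 : j < T.length) :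
    LPF T j ≤ LPF T (j + 1) + 1 :=
  lpf_succ_ge_pred_general T j
end

section
/- Correctness of the final step of the LRS-to-LPF conversion: for every string T = T[1..n] and every position j with n − LRS[n] + 1 ≤ j ≤ n, it holds that LPF[j] = n − j + 1. -/
variable {α : Type*}

/-!
The suffix `S = T[n−L+1..n]` with `L = LRS[n]` occurs twice in `T`; since no occurrence of
`S` can start after `n − L + 1`, the other one starts at some `p < n − L + 1`. Every suffix
`T[j..n]` of `S` then occurs at `p + (j − (n − L + 1)) < j`, so `LPF[j]` reaches its largest
possible value `n − j + 1`.
-/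

theorem two_le_occCount_drop_LRS (T : List α) (i : ℕ) (h : LRS T i ≠ 0) :
    2 ≤ occCount (T.take i) ((T.take i).drop (i - LRS T i)) :=
  @Nat.findGreatest_of_ne_zero _
    (fun ℓ => 2 ≤ occCount (T.take i) ((T.take i).drop (i - ℓ))) (Classical.decPred _) _ rfl h

theorem exists_occursAt_lt_of_two_le_occCount_drop (T : List α) (k : ℕ)
    (h : 2 ≤ occCount T (T.drop k)) : ∃ p < k + 1, occursAt T (T.drop k) p := by
  obtain ⟨p, hocc, hne⟩ := Set.exists_ne_of_one_lt_ncard (s := {p | occursAt T (T.drop k) p})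
    (by unfold occCount at h; omega) (k + 1)
  have hlen := hocc.2.1
  rw [List.length_drop] at hlen
  exact ⟨p, by omega, hocc⟩

theorem occursAt.drop {T S : List α} {p d : ℕ} (h : occursAt T S p) (hd : d ≤ S.length) :
    occursAt T (S.drop d) (p + d) := by
  obtain ⟨hp, hlen, htake⟩ := h
  refine ⟨by omega, by rw [List.length_drop]; omega, ?_⟩
  have shifted := congrArg (List.drop d) htake
  rwa [List.drop_take, List.drop_drop, show p - 1 + d = p + d - 1 by omega,
    ← List.length_drop] at shifted

theorem sub_length_sub_add_one (T : List α) (i : ℕ) :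
    sub T i (T.length - i + 1) = T.drop (i - 1) :=
  List.take_of_length_le (by rw [List.length_drop]; omega)

theorem LPF_eq_of_occursAt_drop (T : List α) {i q : ℕ} (hi : i ≤ T.length) (hq : q < i)
    (hocc : occursAt T (T.drop (i - 1)) q) : LPF T i = T.length - i + 1 := by
  have hq1 := hocc.1
  refine (@Nat.findGreatest_eq_iff _ _ _ (Classical.decPred _)).2
    ⟨by omega, fun _ => ⟨by omega, q, hq1, hq, ?_⟩, fun ℓ hℓ _ ⟨hfits, _⟩ => by omega⟩
  rwa [sub_length_sub_add_one]

theorem lrs_to_lpf_final_general (T : List α) (j : ℕ)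
    (h1 : T.length - LRS T T.length + 1 ≤ j) (h2 : j ≤ T.length) :
    LPF T j = T.length - j + 1 := by
  set n := T.length
  set L := LRS T n
  have hrepeat := two_le_occCount_drop_LRS T n (by omega)
  rw [List.take_length] at hrepeat
  obtain ⟨p, hp, hocc⟩ := exists_occursAt_lt_of_two_le_occCount_drop T (n - L) hrepeat
  have hsuffix := hocc.drop (d := j - 1 - (n - L)) (by rw [List.length_drop]; omega)
  rw [List.drop_drop, show n - L + (j - 1 - (n - L)) = j - 1 by omega] at hsuffix
  exact LPF_eq_of_occursAt_drop T (by omega) (by omega) hsuffix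

/-- correctness of the final step of the LRS-to-LPF conversion: for every
position `j` with `n − LRS[n] + 1 ≤ j ≤ n`, it holds that `LPF[j] = n − j + 1`. -/
theorem lrs_to_lpf_final (T : List α) (hn : 1 ≤ T.length) (j : ℕ)
    (h1 : T.length - LRS T T.length + 1 ≤ j) (h2 : j ≤ T.length) :
    LPF T j = T.length - j + 1 :=
  lrs_to_lpf_final_general T j h1 h2
end

section
/- Shortest unique suffix of a unique substring with repeating left part is a MUS: let W = W[1..n] and 1 ≤ a ≤ b ≤ n be such that W[a..b] is unique in W and W[a..b−1] is repeating in W. Let ℓ be the largest index in [a..b] such that W[ℓ..b] is unique in W (ℓ exists since ℓ = a qualifies). Then [ℓ..b] ∈ MUS(W). -/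
variable {α : Type*}

/-- `MUS T`: the set of (1-based) intervals `[s..t] ⊆ [1..n]` such that `T[s..t]` is
unique in `T` while `T[s+1..t]` and `T[s..t−1]` are repeating in `T`. -/
def MUS (T : List α) : Set (ℕ × ℕ) :=
  {st | 1 ≤ st.1 ∧ st.1 ≤ st.2 ∧ st.2 ≤ T.length ∧
    occCount T (sub T st.1 (st.2 - st.1 + 1)) = 1 ∧
    2 ≤ occCount T (sub T (st.1 + 1) (st.2 - st.1)) ∧
    2 ≤ occCount T (sub T st.1 (st.2 - st.1))}


/-! If `ℓ < b`, the string `W[ℓ+1..b]` starts in `(ℓ..b]`, so by maximality of `ℓ` it is not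
unique; it occurs at `ℓ + 1`, hence it is repeating. If `ℓ = b` it is empty, hence repeating.
The string `W[ℓ..b−1]` is a suffix of the repeating `W[a..b−1]`, and every occurrence of a string
yields an occurrence of each of its suffixes, so it is repeating as well. -/

theorem setOf_occursAt_finite (T S : List α) : {p | occursAt T S p}.Finite :=
  (Set.finite_Icc 1 (T.length + 1)).subset fun _ ⟨h1, h2, _⟩ => ⟨h1, by omega⟩

theorem occCount_nil (T : List α) : occCount T [] = T.length + 1 := by
  have hocc : {p | occursAt T ([] : List α) p} = Set.Icc 1 (T.length + 1) := by
    ext p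
    simp [occursAt]
  rw [occCount, hocc, Set.ncard_eq_toFinset_card', Set.toFinset_Icc, Nat.card_Icc]
  omega

theorem occursAt.of_append_left {T X S : List α} {p : ℕ} (h : occursAt T (X ++ S) p) :
    occursAt T S (p + X.length) := by
  obtain ⟨hp, hlen, htake⟩ := h
  refine ⟨by omega, by simp only [List.length_append] at hlen; omega, ?_⟩
  have hdrop := congrArg (List.drop X.length) htake
  rw [List.drop_take, List.drop_drop, List.drop_left, List.length_append,
    Nat.add_sub_cancel_left] at hdrop
  rwa [show p + X.length - 1 = p - 1 + X.length by omega]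

theorem occCount_append_left_le (T X S : List α) : occCount T (X ++ S) ≤ occCount T S :=
  Set.ncard_le_ncard_of_injOn (· + X.length) (fun _ hp => hp.of_append_left)
    (fun _ _ _ _ h => Nat.add_right_cancel h) (setOf_occursAt_finite T S)

theorem occursAt_sub_self (T : List α) {i m : ℕ} (hi : 1 ≤ i) (hm : i - 1 + m ≤ T.length) :
    occursAt T (sub T i m) i := by
  have hlen : (sub T i m).length = m := by
    simp only [sub, List.length_take, List.length_drop]
    omega
  exact ⟨hi, by omega, by rw [hlen]; rfl⟩

theorem one_le_occCount_sub (T : List α) {i m : ℕ} (hi : 1 ≤ i) (hm : i - 1 + m ≤ T.length) :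
    1 ≤ occCount T (sub T i m) := by
  rw [Nat.one_le_iff_ne_zero, occCount, Ne, Set.ncard_eq_zero (setOf_occursAt_finite T _)]
  exact Set.nonempty_iff_ne_empty.mp ⟨i, occursAt_sub_self T hi hm⟩

theorem sub_append_sub (T : List α) {i : ℕ} (hi : 1 ≤ i) (m k : ℕ) :
    sub T i m ++ sub T (i + m) k = sub T i (m + k) := by
  rw [sub, sub, sub, List.take_add, List.drop_drop, show i + m - 1 = i - 1 + m by omega]

theorem occCount_sub_le_of_le (T : List α) {s s' t : ℕ} (hs : 1 ≤ s) (hss' : s ≤ s')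
    (hs't : s' ≤ t) : occCount T (sub T s (t - s)) ≤ occCount T (sub T s' (t - s')) := by
  have hsplit := sub_append_sub T hs (s' - s) (t - s')
  rw [Nat.add_sub_cancel' hss', show s' - s + (t - s') = t - s by omega] at hsplit
  exact hsplit ▸ occCount_append_left_le T _ _

theorem shortest_unique_suffix_is_mus_general (W : List α) (a b ℓ : ℕ)
    (ha : 1 ≤ a) (hb : b ≤ W.length)
    (hrep : 2 ≤ occCount W (sub W a (b - a)))
    (hℓ1 : a ≤ ℓ) (hℓ2 : ℓ ≤ b)
    (hu : occCount W (sub W ℓ (b - ℓ + 1)) = 1)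
    (hmax : ∀ ℓ', ℓ < ℓ' → ℓ' ≤ b → occCount W (sub W ℓ' (b - ℓ' + 1)) ≠ 1) :
    (ℓ, b) ∈ MUS W := by
  refine ⟨by omega, hℓ2, hb, hu, ?_, hrep.trans (occCount_sub_le_of_le W ha hℓ1 hℓ2)⟩
  change 2 ≤ occCount W (sub W (ℓ + 1) (b - ℓ))
  rcases hℓ2.eq_or_lt with rfl | hlt
  · rw [Nat.sub_self, sub, List.take_zero, occCount_nil]
    omega
  · have hnot_unique := hmax (ℓ + 1) (by omega) hlt
    have hoccurs := one_le_occCount_sub W (i := ℓ + 1) (m := b - ℓ) (by omega) (by omega)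
    rw [show b - (ℓ + 1) + 1 = b - ℓ by omega] at hnot_unique
    omega

/-- shortest unique suffix of a unique substring with repeating left part
is a MUS: if `W[a..b]` is unique in `W`, `W[a..b−1]` is repeating in `W`, and `ℓ` is the
largest index in `[a..b]` such that `W[ℓ..b]` is unique in `W`, then `[ℓ..b] ∈ MUS(W)`. -/
theorem shortest_unique_suffix_is_mus (W : List α) (a b ℓ : ℕ)
    (ha : 1 ≤ a) (hab : a ≤ b) (hb : b ≤ W.length)
    (huniq : occCount W (sub W a (b - a + 1)) = 1)
    (hrep : 2 ≤ occCount W (sub W a (b - a)))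
    (hℓ1 : a ≤ ℓ) (hℓ2 : ℓ ≤ b)
    (hu : occCount W (sub W ℓ (b - ℓ + 1)) = 1)
    (hmax : ∀ ℓ', ℓ < ℓ' → ℓ' ≤ b → occCount W (sub W ℓ' (b - ℓ' + 1)) ≠ 1) :
    (ℓ, b) ∈ MUS W :=
  shortest_unique_suffix_is_mus_general W a b ℓ ha hb hrep hℓ1 hℓ2 hu hmax
end

section
/- Characterization of self-overlapping reversed factors via palindromic suffixes: let W = W[1..n] be a string and F its suffix of length m with 1 ≤ m ≤ n. Then there exists an occurrence of the reversed string rev(F) in W that overlaps the suffix occurrence of F — i.e., a position p with 1 ≤ p ≤ n − m + 1, W[p..p+m−1] = rev(F), and p + m − 1 ≥ n − m + 1 — if and only if W has a palindromic suffix of length L for some L with m ≤ L ≤ 2m − 1, i.e., W[n−L+1..n] is a palindrome. -/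
variable {α : Type*}

/-!
Put `S := W[p..n]`, of length `L = n - p + 1`. An occurrence of `rev F` at `p` says that the
prefix of length `m` of `S` is the reverse of its suffix of length `m`, i.e. that `S` and `rev S`
agree on their first `m` letters, and hence, reversing, on their last `m` letters. The overlap
condition is exactly `L ≤ 2m - 1`, so these two blocks cover `S` and `S` is a palindrome.
Conversely a palindromic suffix of length `L` carries `rev F` at position `n - L + 1`.
-/

namespace List

theorem eq_of_take_eq_of_drop_eq {l₁ l₂ : List α} {k m : ℕ} (hkm : k ≤ m)
    (ht : l₁.take m = l₂.take m) (hd : l₁.drop k = l₂.drop k) : l₁ = l₂ := by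
  rw [← take_append_drop k l₁, ← take_append_drop k l₂, hd, ← min_eq_left hkm, ← take_take,
    ht, take_take]

theorem take_eq_reverse_drop_iff_reverse_eq {S : List α} {m : ℕ} (hm : m ≤ S.length)
    (hS : S.length ≤ 2 * m) :
    S.take m = (S.drop (S.length - m)).reverse ↔ S.reverse = S := by
  rw [← take_reverse]
  constructor
  · intro h
    have hdrop : S.reverse.drop (S.length - m) = S.drop (S.length - m) := by
      rw [drop_reverse, Nat.sub_sub_self hm, h, reverse_take, reverse_reverse, length_reverse]
    exact eq_of_take_eq_of_drop_eq (by omega) h.symm hdrop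
  · intro h
    rw [h]

theorem drop_drop_length_sub {W : List α} {k m : ℕ} (h : k + m ≤ W.length) :
    (W.drop k).drop ((W.drop k).length - m) = W.drop (W.length - m) := by
  rw [drop_drop, length_drop]
  congr 1
  omega

end List

open List

theorem occursAt_reverse_drop_length_sub_iff {W : List α} {m k : ℕ} (hmW : m ≤ W.length) :
    occursAt W (W.drop (W.length - m)).reverse (k + 1) ↔
      k + m ≤ W.length ∧ (W.drop k).take m = ((W.drop k).drop ((W.drop k).length - m)).reverse := by
  unfold occursAt
  rw [length_reverse, length_drop, Nat.sub_sub_self hmW, Nat.add_sub_cancel]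
  constructor
  · rintro ⟨-, hkm, h⟩
    exact ⟨by omega, by rwa [drop_drop_length_sub (by omega)]⟩
  · rintro ⟨hkm, h⟩
    exact ⟨by omega, by omega, by rwa [drop_drop_length_sub hkm] at h⟩

/-- characterization of self-overlapping reversed factors via palindromic
suffixes: let `F` be the suffix of `W = W[1..n]` of length `m` (`1 ≤ m ≤ n`). There is
an occurrence of `rev(F)` in `W` at a position `p` with `p + m − 1 ≥ n − m + 1` (i.e.
overlapping the suffix occurrence of `F`) if and only if `W` has a palindromic suffix of
length `L` for some `m ≤ L ≤ 2m − 1`. -/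
theorem overlapping_reversed_iff_palindromic_suffix (W : List α) (m : ℕ)
    (hm : 1 ≤ m) (hmn : m ≤ W.length) :
    (∃ p, occursAt W (W.drop (W.length - m)).reverse p ∧
      W.length - m + 1 ≤ p + m - 1) ↔
    (∃ L, m ≤ L ∧ L ≤ 2 * m - 1 ∧ L ≤ W.length ∧
      (W.drop (W.length - L)).reverse = W.drop (W.length - L)) := by
  constructor
  · rintro ⟨p, hocc, hov⟩
    obtain ⟨k, rfl⟩ : ∃ k, p = k + 1 := ⟨p - 1, by have := hocc.1; omega⟩
    obtain ⟨hkm, htake⟩ := (occursAt_reverse_drop_length_sub_iff hmn).mp hocc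
    refine ⟨W.length - k, by omega, by omega, by omega, ?_⟩
    rw [Nat.sub_sub_self (by omega)]
    refine (take_eq_reverse_drop_iff_reverse_eq ?_ ?_).mp htake <;> rw [length_drop] <;> omega
  · rintro ⟨L, hmL, hL2m, hLW, hpal⟩
    refine ⟨W.length - L + 1, (occursAt_reverse_drop_length_sub_iff hmn).mpr ⟨by omega, ?_⟩,
      by omega⟩
    refine (take_eq_reverse_drop_iff_reverse_eq ?_ ?_).mpr hpal <;> rw [length_drop] <;> omega
end
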